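/- Let d₁ ≥ ⋯ ≥ d_p > 0 with min_{l=1,…,p−1} d_l/d_{l+1} > c for some c > 1, let λ > 0 and 1 ≤ k ≤ p with |λ/d_k − 1| < (c−1)/(2c), and set c₁ = min{ (c−1)/2, ((c−1)/c)(1 − 1/(2c)) }. Suppose ω_{1,1},…,ω_{p,p} are positive reals with max_{j=1,…,p} |ω_{j,j} − 1| ≤ c₁/2, and define v_{j,j} = ω_{j,j} − λ/d_j for j = 1,…,p. Then v_{j,j} ≥ c₁/2 for all j < k, and v_{j,j} ≤ −c₁/2 for all j > k. -/
import Mathlib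


/-- Appendix Lemma A.2 (sign lemma for the diagonal of the shifted characteristic matrix).
Indices are 0-based. -/
theorem statement7 {p : ℕ} (d : Fin p → ℝ) (hpos : ∀ i, 0 < d i) (hmono : Antitone d)
    (c : ℝ) (hc : 1 < c)
    (hgap : ∀ l : ℕ, (h : l + 1 < p) → c < d ⟨l, by omega⟩ / d ⟨l + 1, h⟩)
    (lam : ℝ) (hlam : 0 < lam) (k : Fin p)
    (hk : |lam / d k - 1| < (c - 1) / (2 * c))
    (c₁ : ℝ) (hc₁ : c₁ = min ((c - 1) / 2) ((c - 1) / c * (1 - 1 / (2 * c))))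
    (w : Fin p → ℝ) (hw : ∀ j, 0 < w j) (hw1 : ∀ j, |w j - 1| ≤ c₁ / 2)
    (v : Fin p → ℝ) (hv : ∀ j, v j = w j - lam / d j) :
    (∀ j : Fin p, j < k → c₁ / 2 ≤ v j) ∧ ∀ j : Fin p, k < j → v j ≤ -(c₁ / 2) := by
  have hc0 : (0:ℝ) < c := by linarith
  have hdk : 0 < d k := hpos k
  have hk1 : lam / d k - 1 < (c - 1) / (2 * c) := (abs_lt.mp hk).2
  have hk2 : -((c - 1) / (2 * c)) < lam / d k - 1 := (abs_lt.mp hk).1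
  have hA : lam / d k < (3 * c - 1) / (2 * c) := by
    have : (1 : ℝ) + (c - 1) / (2 * c) = (3 * c - 1) / (2 * c) := by field_simp; ring
    linarith
  have hB : (c + 1) / (2 * c) < lam / d k := by
    have : (1 : ℝ) - (c - 1) / (2 * c) = (c + 1) / (2 * c) := by field_simp; ring
    linarith
  have hc1a : c₁ ≤ (c - 1) / 2 := hc₁ ▸ min_le_left _ _
  have hc1b : c₁ ≤ (c - 1) / c * (1 - 1 / (2 * c)) := hc₁ ▸ min_le_right _ _
  constructor
  · intro j hjk
    have hjk' : (j : ℕ) < (k : ℕ) := hjk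
    have hkpos : 1 ≤ (k : ℕ) := by omega
    have hm : (k : ℕ) - 1 + 1 < p := by omega
    have hgapk := hgap ((k : ℕ) - 1) hm
    have hkeq : (⟨(k : ℕ) - 1 + 1, hm⟩ : Fin p) = k := by
      apply Fin.ext; simp; omega
    rw [hkeq] at hgapk
    have hd1 : c * d k < d ⟨(k : ℕ) - 1, by omega⟩ :=
      (lt_div_iff₀ hdk).mp hgapk
    have hd2 : d ⟨(k : ℕ) - 1, by omega⟩ ≤ d j := by
      apply hmono
      show (j : ℕ) ≤ (k : ℕ) - 1
      omega
    have hdj : c * d k < d j := lt_of_lt_of_le hd1 hd2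
    have hstep : lam / d j < lam / (c * d k) :=
      div_lt_div_of_pos_left hlam (by positivity) hdj
    have heq : lam / (c * d k) = (lam / d k) / c := by
      rw [mul_comm, ← div_div]
    have hfinal : lam / d j < (3 * c - 1) / (2 * c) / c := by
      rw [heq] at hstep
      calc lam / d j < (lam / d k) / c := hstep
        _ < (3 * c - 1) / (2 * c) / c := by
            apply div_lt_div_of_pos_right hA hc0
    have hwlb : 1 - c₁ / 2 ≤ w j := by
      have := abs_le.mp (hw1 j); linarith [this.1]
    have hkey : (3 * c - 1) / (2 * c) / c ≤ 1 - c₁ := by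
      have h1 : (c - 1) / c * (1 - 1 / (2 * c)) = 1 - (3 * c - 1) / (2 * c) / c := by
        field_simp; ring
      linarith [hc1b, h1 ▸ hc1b]
    rw [hv j]
    linarith
  · intro j hjk
    have hjk' : (k : ℕ) < (j : ℕ) := hjk
    have hm : (k : ℕ) + 1 < p := by omega
    have hgapk := hgap (k : ℕ) hm
    have hkeq : (⟨(k : ℕ), by omega⟩ : Fin p) = k := by apply Fin.ext; simp
    rw [hkeq] at hgapk
    have hdnext : 0 < d ⟨(k : ℕ) + 1, hm⟩ := hpos _
    have hd1 : c * d ⟨(k : ℕ) + 1, hm⟩ < d k := (lt_div_iff₀ hdnext).mp hgapk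
    have hd2 : d j ≤ d ⟨(k : ℕ) + 1, hm⟩ := by
      apply hmono
      show (k : ℕ) + 1 ≤ (j : ℕ)
      omega
    have hdj : c * d j < d k := lt_of_le_of_lt (by nlinarith) hd1
    have hdj0 : 0 < d j := hpos j
    have hstep : lam / d k < lam / (c * d j) :=
      div_lt_div_of_pos_left hlam (by positivity) hdj
    have heq : lam / (c * d j) = (lam / d j) / c := by rw [mul_comm, ← div_div]
    have hfinal : (c + 1) / (2 * c) < (lam / d j) / c := by
      rw [heq] at hstep; linarith
    have hfin2 : (c + 1) / 2 < lam / d j := by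
      have h2 := (div_lt_div_iff₀ (by positivity) hc0).mp hfinal
      nlinarith [h2, hc0]
    have hwub : w j ≤ 1 + c₁ / 2 := by
      have := abs_le.mp (hw1 j); linarith [this.2]
    rw [hv j]
    nlinarith [hc1a]
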